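/- arXiv:1303.1714 — 6 statements merged into one kernel-verified Lean document; each statement's English description precedes it below -/
import Mathlib

section
/- For real numbers κ₁, κ₂, κ₃, κ₄ each ≥ 1, let p₁ = (κ₁+κ₂+κ₃+κ₄)/4, p₂ = (Σ_{i<j} κᵢκⱼ)/6, p₃ = (Σ_{i<j<k} κᵢκⱼκₖ)/4, p₄ = κ₁κ₂κ₃κ₄. Then 3(p₂p₄ − p₃²) + (p₁p₃ − p₄) ≤ 0. -/
/-!
Put `x = a - 1`, `y = b - 1`, `z = c - 1`, `w = d - 1`, all nonnegative. Then `-16` times the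
left-hand side becomes a polynomial in `x, y, z, w` that is visibly nonnegative: a sum of squares
weighted by monomials in the shifted variables.
-/

lemma shifted_newton_gap_nonneg {x y z w : ℝ} (hx : 0 ≤ x) (hy : 0 ≤ y) (hz : 0 ≤ z) (hw : 0 ≤ w) :
    0 ≤ x * ((y - z) ^ 2 + (y - w) ^ 2 + (z - w) ^ 2) + y * ((x - z) ^ 2 + (x - w) ^ 2 + (z - w) ^ 2)
      + z * ((x - y) ^ 2 + (x - w) ^ 2 + (y - w) ^ 2) + w * ((x - y) ^ 2 + (x - z) ^ 2 + (y - z) ^ 2)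
      + 4 * ((x * y - z * w) ^ 2 + (x * z - y * w) ^ 2 + (x * w - y * z) ^ 2)
      + x * y * (1 + 2 * x + 2 * y + x * y) * (z - w) ^ 2
      + x * z * (1 + 2 * x + 2 * z + x * z) * (y - w) ^ 2
      + x * w * (1 + 2 * x + 2 * w + x * w) * (y - z) ^ 2
      + y * z * (1 + 2 * y + 2 * z + y * z) * (x - w) ^ 2
      + y * w * (1 + 2 * y + 2 * w + y * w) * (x - z) ^ 2
      + z * w * (1 + 2 * z + 2 * w + z * w) * (x - y) ^ 2 := by
  positivity

theorem stmt0 (a b c d : ℝ) (ha : 1 ≤ a) (hb : 1 ≤ b) (hc : 1 ≤ c) (hd : 1 ≤ d) :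
    3 * (((a*b + a*c + a*d + b*c + b*d + c*d) / 6) * (a*b*c*d) - ((a*b*c + a*b*d + a*c*d + b*c*d) / 4)^2)
      + ((a + b + c + d) / 4) * ((a*b*c + a*b*d + a*c*d + b*c*d) / 4) - (a*b*c*d) ≤ 0 := by
  linear_combination
    shifted_newton_gap_nonneg (sub_nonneg.2 ha) (sub_nonneg.2 hb) (sub_nonneg.2 hc) (sub_nonneg.2 hd) / 16
end

section
/- For four real numbers κ₁, κ₂, κ₃, κ₄, one has the identity 16·(3(p₂p₄−p₃²) + p₁p₃ − p₄) = Σ_{cyc} κᵢκⱼ(1 − κᵢκⱼ)(κₖ − κₗ)², the cyclic sum being over the six unordered pairs {i,j} with {k,l} the complementary pair. In particular if κᵢκⱼ ≥ 1 for all i ≠ j, then 3(p₂p₄−p₃²) + p₁p₃ − p₄ ≤ 0. -/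
/-! Multiplied by 16, the left-hand side is `8σ₂σ₄ - 3σ₃² + σ₁σ₃ - 16σ₄`, and the identity is a
polynomial identity over any commutative ring. When every pairwise product is at least `1`, each
summand `κᵢκⱼ (1 - κᵢκⱼ) (κₖ - κₗ)²` is a nonpositive number times a square. -/

theorem symmetric_combination_eq_sum_pairs {R : Type*} [CommRing R] (a b c d : R) :
    8 * (a*b + a*c + a*d + b*c + b*d + c*d) * (a*b*c*d) - 3 * (a*b*c + a*b*d + a*c*d + b*c*d)^2
        + (a + b + c + d) * (a*b*c + a*b*d + a*c*d + b*c*d) - 16 * (a*b*c*d) =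
      a * b * (1 - a * b) * (c - d)^2 + a * c * (1 - a * c) * (b - d)^2
        + a * d * (1 - a * d) * (b - c)^2 + b * c * (1 - b * c) * (a - d)^2
        + b * d * (1 - b * d) * (a - c)^2 + c * d * (1 - c * d) * (a - b)^2 := by
  ring

theorem mul_one_sub_mul_sq_nonpos {R : Type*} [CommRing R] [LinearOrder R] [IsStrictOrderedRing R]
    {x y : R} (h : 1 ≤ x * y) (z : R) : x * y * (1 - x * y) * z ^ 2 ≤ 0 :=
  mul_nonpos_of_nonpos_of_nonneg
    (mul_nonpos_of_nonneg_of_nonpos (zero_le_one.trans h) (sub_nonpos.mpr h)) (sq_nonneg z)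

theorem stmt4 (a b c d : ℝ) :
    (16 * (3 * (((a*b + a*c + a*d + b*c + b*d + c*d) / 6) * (a*b*c*d) - ((a*b*c + a*b*d + a*c*d + b*c*d) / 4)^2)
        + ((a + b + c + d) / 4) * ((a*b*c + a*b*d + a*c*d + b*c*d) / 4) - (a*b*c*d)) =
      a * b * (1 - a * b) * (c - d)^2 + a * c * (1 - a * c) * (b - d)^2 + a * d * (1 - a * d) * (b - c)^2 + b * c * (1 - b * c) * (a - d)^2 + b * d * (1 - b * d) * (a - c)^2 + c * d * (1 - c * d) * (a - b)^2) ∧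
    ((1 ≤ a * b ∧ 1 ≤ a * c ∧ 1 ≤ a * d ∧ 1 ≤ b * c ∧ 1 ≤ b * d ∧ 1 ≤ c * d) →
      3 * (((a*b + a*c + a*d + b*c + b*d + c*d) / 6) * (a*b*c*d) - ((a*b*c + a*b*d + a*c*d + b*c*d) / 4)^2)
        + ((a + b + c + d) / 4) * ((a*b*c + a*b*d + a*c*d + b*c*d) / 4) - (a*b*c*d) ≤ 0) := by
  have identity := symmetric_combination_eq_sum_pairs a b c d
  refine ⟨by linear_combination identity, fun ⟨hab, hac, had, hbc, hbd, hcd⟩ => ?_⟩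
  linarith [identity, mul_one_sub_mul_sq_nonpos hab (c - d), mul_one_sub_mul_sq_nonpos hac (b - d),
    mul_one_sub_mul_sq_nonpos had (b - c), mul_one_sub_mul_sq_nonpos hbc (a - d),
    mul_one_sub_mul_sq_nonpos hbd (a - c), mul_one_sub_mul_sq_nonpos hcd (a - b)]
end

section
/- For five real numbers κ₁,…,κ₅ each ≥ 1, one has 100·(3(p₅p₃−p₄²) + p₁p₃ − p₄) = Σ_{cyc} [κᵢκⱼ + κⱼκₖ + κᵢκₖ − 3(κᵢκⱼκₖ)²](κₗ − κₘ)² ≤ 0, where each summand has distinct indices {i,j,k,l,m} = {1,…,5}. -/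
lemma mul_add_mul_add_mul_le_three_mul_sq {x y z : ℝ} (hx : 1 ≤ x) (hy : 1 ≤ y)
    (hz : 1 ≤ z) :
    x * y + y * z + x * z ≤ 3 * (x * y * z) ^ 2 := by
  have hxyz : 1 ≤ x * y * z :=
    one_le_mul_of_one_le_of_one_le (one_le_mul_of_one_le_of_one_le hx hy) hz
  have hxy : x * y ≤ x * y * z := le_mul_of_one_le_right (by positivity) hz
  have hyz : y * z ≤ x * y * z := by
    rw [mul_assoc]; exact le_mul_of_one_le_left (by positivity) hx
  have hxz : x * z ≤ x * y * z := by
    rw [mul_right_comm]; exact le_mul_of_one_le_right (by positivity) hy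
  have hsq : x * y * z ≤ (x * y * z) ^ 2 := le_self_pow₀ hxyz two_ne_zero
  linarith

lemma weighted_sq_sub_nonpos {x y z : ℝ} (hx : 1 ≤ x) (hy : 1 ≤ y) (hz : 1 ≤ z)
    (u v : ℝ) :
    (x * y + y * z + x * z - 3 * (x * y * z) ^ 2) * (u - v) ^ 2 ≤ 0 :=
  mul_nonpos_of_nonpos_of_nonneg (sub_nonpos.2 (mul_add_mul_add_mul_le_three_mul_sq hx hy hz))
    (sq_nonneg _)

theorem stmt7 (a b c d e : ℝ) (ha : 1 ≤ a) (hb : 1 ≤ b) (hc : 1 ≤ c) (hd : 1 ≤ d)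
    (he : 1 ≤ e) :
    100 * (3 * ((a*b*c*d*e) * ((a*b*c + a*b*d + a*b*e + a*c*d + a*c*e + a*d*e + b*c*d + b*c*e + b*d*e + c*d*e) / 10) - ((a*b*c*d + a*b*c*e + a*b*d*e + a*c*d*e + b*c*d*e) / 5)^2)
        + ((a + b + c + d + e) / 5) * ((a*b*c + a*b*d + a*b*e + a*c*d + a*c*e + a*d*e + b*c*d + b*c*e + b*d*e + c*d*e) / 10) - (a*b*c*d + a*b*c*e + a*b*d*e + a*c*d*e + b*c*d*e) / 5) =
      (c * d + d * e + c * e - 3 * (c * d * e)^2) * (a - b)^2 + (b * d + d * e + b * e - 3 * (b * d * e)^2) * (a - c)^2 + (b * c + c * e + b * e - 3 * (b * c * e)^2) * (a - d)^2 + (b * c + c * d + b * d - 3 * (b * c * d)^2) * (a - e)^2 + (a * d + d * e + a * e - 3 * (a * d * e)^2) * (b - c)^2 + (a * c + c * e + a * e - 3 * (a * c * e)^2) * (b - d)^2 + (a * c + c * d + a * d - 3 * (a * c * d)^2) * (b - e)^2 + (a * b + b * e + a * e - 3 * (a * b * e)^2) * (c - d)^2 + (a * b + b * d + a * d - 3 *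 (a * b * d)^2) * (c - e)^2 + (a * b + b * c + a * c - 3 * (a * b * c)^2) * (d - e)^2 ∧
    (c * d + d * e + c * e - 3 * (c * d * e)^2) * (a - b)^2 + (b * d + d * e + b * e - 3 * (b * d * e)^2) * (a - c)^2 + (b * c + c * e + b * e - 3 * (b * c * e)^2) * (a - d)^2 + (b * c + c * d + b * d - 3 * (b * c * d)^2) * (a - e)^2 + (a * d + d * e + a * e - 3 * (a * d * e)^2) * (b - c)^2 + (a * c + c * e + a * e - 3 * (a * c * e)^2) * (b - d)^2 + (a * c + c * d + a * d - 3 * (a * c * d)^2) * (b - e)^2 + (a * b + b * e + a * e - 3 * (a * b * e)^2) * (c - d)^2 + (a * b + b * d + a * d - 3 * (a * b * d)^2) * (c - e)^2 + (a * b + b * c + a * c - 3 * (a * b * c)^2) * (d - e)^2 ≤ 0 := by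
  refine ⟨by ring, ?_⟩
  linarith [weighted_sq_sub_nonpos hc hd he a b, weighted_sq_sub_nonpos hb hd he a c,
    weighted_sq_sub_nonpos hb hc he a d, weighted_sq_sub_nonpos hb hc hd a e,
    weighted_sq_sub_nonpos ha hd he b c, weighted_sq_sub_nonpos ha hc he b d,
    weighted_sq_sub_nonpos ha hc hd b e, weighted_sq_sub_nonpos ha hb he c d,
    weighted_sq_sub_nonpos ha hb hd c e, weighted_sq_sub_nonpos ha hb hc d e]
end

section
/- Let n ≥ 6 and let κ = (κ₁,…,κ_{n−1}) ∈ ℝ^{n−1} with each κᵢ ≥ 1. Writing σ_k = σ_k(κ) for the elementary symmetric polynomials (which are all positive), the following refined Newton–MacLaurin inequality holds: (5σ₅σ₃/σ₄ − 4(n−5)/(n−4)·σ₄) + ((n−4)(n−5)/6)·(4(n−3)/(n−4)·σ₂ − 3σ₃²/σ₄) + ((n−2)(n−3)(n−4)(n−5)/24)·(σ₁σ₃/σ₄ − 4(n−1)/(n−4)) ≤ 0. -/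
noncomputable def esymm (n k : ℕ) (f : Fin n → ℝ) : ℝ :=
  ∑ s ∈ Finset.powersetCard k Finset.univ, ∏ i ∈ s, f i

/-!
Write `E k = σ_k / C(n - 1, k)` for the normalized elementary symmetric means, with `E 0 = 1`.
Up to the positive factor `(n - 1)(n - 2)(n - 3)(n - 5) / (6 E₄)`, the three brackets of the
inequality are the Newton defects `E₃E₅ - E₄²`, `2 (E₂E₄ - E₃²)` and `E₁E₃ - E₀E₄`.

Put `κ = 1 + x` with `x ≥ 0`. The rule `E_k(1 + x) = ∑ i, C(k, i) E_i(x)` turns the sum of the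
defects into a combination, with nonnegative integer coefficients, of the generalized Newton defects
`E_i E_{j+2} - E_{i+1} E_{j+1}` of `x` for `i ≤ j ≤ 3`. Each of these is nonpositive for `x ≥ 0`:
expanding products `σ_i σ_j` in the monomial symmetric functions `m_{(2^a 1^b)}`, it becomes a
nonnegative combination of the inequalities
`(b + 2)(b + 1) m_{(2^a 1^(b+2))} ≤ (a + 1)(m - a - b - 1) m_{(2^(a+1) 1^b)}` in `m = n - 1`
variables, which follow from `2 x_l x_k ≤ x_l² + x_k²`.
-/

open Finset

theorem sum_powersetCard_sum_powersetCard {α β : Type*} [DecidableEq α] [AddCommMonoid β]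
    (C : Finset α) {n p : ℕ} (hp : p ≤ n) (f : Finset α → Finset α → β) :
    ∑ B ∈ powersetCard n C, ∑ U ∈ powersetCard p B, f U (B \ U)
      = ∑ U ∈ powersetCard p C, ∑ V ∈ powersetCard (n - p) (C \ U), f U V := by
  simp only [sum_sigma']
  refine sum_nbij' (fun q => ⟨q.2, q.1 \ q.2⟩) (fun q => ⟨q.1 ∪ q.2, q.1⟩) ?_ ?_ ?_ ?_ ?_
  · rintro ⟨B, U⟩ h
    simp only [mem_sigma, mem_powersetCard] at h ⊢
    refine ⟨⟨h.2.1.trans h.1.1, h.2.2⟩, sdiff_subset_sdiff h.1.1 le_rfl, ?_⟩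
    rw [card_sdiff_of_subset h.2.1]; omega
  · rintro ⟨U, V⟩ h
    simp only [mem_sigma, mem_powersetCard, subset_sdiff] at h ⊢
    refine ⟨⟨union_subset h.1.1 h.2.1.1, ?_⟩, subset_union_left, h.1.2⟩
    rw [card_union_of_disjoint h.2.1.2.symm]; omega
  · rintro ⟨B, U⟩ h
    simp only [mem_sigma, mem_powersetCard] at h
    simp [union_sdiff_of_subset h.2.1]
  · rintro ⟨U, V⟩ h
    simp only [mem_sigma, mem_powersetCard, subset_sdiff] at h
    simp [union_sdiff_cancel_left h.2.1.2.symm]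
  · intros; rfl

theorem prod_mul_prod_eq_sq_prod_inter_mul {α β : Type*} [DecidableEq α] [CommMonoid β]
    (S T : Finset α) (f : α → β) :
    (∏ i ∈ S, f i) * ∏ i ∈ T, f i = (∏ i ∈ S ∩ T, f i) ^ 2 * ∏ i ∈ (S ∪ T) \ (S ∩ T), f i := by
  rw [← prod_union_inter, ← prod_sdiff inter_subset_union, sq]
  ac_rfl

theorem sum_offDiag_mul_le_sum_offDiag_sq {α : Type*} (s : Finset α) (x : α → ℝ)
    (g : α → α → ℝ) (hg : ∀ i j, g i j = g j i) (hg₀ : ∀ i j, 0 ≤ g i j) :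
    ∑ p ∈ s.offDiag, x p.1 * x p.2 * g p.1 p.2 ≤ ∑ p ∈ s.offDiag, x p.1 ^ 2 * g p.1 p.2 := by
  have mem_swap : ∀ p ∈ s.offDiag, p.swap ∈ s.offDiag := fun p hp => by
    obtain ⟨h1, h2, h12⟩ := mem_offDiag.1 hp
    exact mem_offDiag.2 ⟨h2, h1, Ne.symm h12⟩
  have swap : ∑ p ∈ s.offDiag, x p.2 ^ 2 * g p.1 p.2 = ∑ p ∈ s.offDiag, x p.1 ^ 2 * g p.1 p.2 :=
    sum_nbij' Prod.swap Prod.swap mem_swap mem_swap (by simp) (by simp)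
      (fun p _ => by rw [Prod.fst_swap, Prod.snd_swap, hg])
  calc _ ≤ ∑ p ∈ s.offDiag, (x p.1 ^ 2 * g p.1 p.2 + x p.2 ^ 2 * g p.1 p.2) / 2 :=
        sum_le_sum fun p _ => by nlinarith [mul_nonneg (sq_nonneg (x p.1 - x p.2)) (hg₀ p.1 p.2)]
    _ = _ := by rw [← sum_div, sum_add_distrib, swap]; ring

theorem mul_prod_eq_sum_offDiag {α : Type*} [DecidableEq α] (B : Finset α) {b : ℕ}
    (hB : #B = b + 2) (x : α → ℝ) :
    ((b : ℝ) + 2) * (b + 1) * ∏ i ∈ B, x i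
      = ∑ p ∈ B.offDiag, x p.1 * x p.2 * ∏ i ∈ (B.erase p.1).erase p.2, x i := by
  have h : ∀ p ∈ B.offDiag, x p.1 * x p.2 * ∏ i ∈ (B.erase p.1).erase p.2, x i = ∏ i ∈ B, x i := by
    intro p hp
    obtain ⟨h1, h2, h12⟩ := mem_offDiag.1 hp
    rw [mul_assoc, mul_prod_erase _ _ (mem_erase.2 ⟨Ne.symm h12, h2⟩), mul_prod_erase _ _ h1]
  rw [sum_congr rfl h, sum_const, offDiag_card, hB, nsmul_eq_mul]
  push_cast [Nat.cast_sub (Nat.le_mul_self _)]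
  ring

theorem esymm_add_one {m : ℕ} (x : Fin m → ℝ) (k : ℕ) :
    esymm m k (x + 1) = ∑ i ∈ range (k + 1), ((m - i).choose (k - i) : ℝ) * esymm m i x := by
  have expand : ∀ s ∈ powersetCard k (univ : Finset (Fin m)),
      ∏ j ∈ s, (x + 1) j = ∑ i ∈ range (k + 1), ∑ t ∈ powersetCard i s, ∏ j ∈ t, x j := by
    intro s hs
    simp only [Pi.add_apply, Pi.one_apply, prod_add, prod_const_one, mul_one, sum_powerset,
      (mem_powersetCard.1 hs).2]
  rw [esymm, sum_congr rfl expand, sum_comm]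
  refine sum_congr rfl fun i hi => ?_
  rw [sum_powersetCard_sum_powersetCard univ (Nat.lt_succ_iff.1 (mem_range.1 hi))
    (fun t _ => ∏ j ∈ t, x j), esymm, mul_sum]
  refine sum_congr rfl fun t ht => ?_
  rw [sum_const, card_powersetCard, card_univ_sdiff, (mem_powersetCard.1 ht).2, Fintype.card_fin,
    nsmul_eq_mul]

/-- The monomial symmetric function `m_{(2^a 1^b)}` of `x`. -/
noncomputable def msymm21 (m a b : ℕ) (x : Fin m → ℝ) : ℝ :=
  ∑ A ∈ powersetCard a (univ : Finset (Fin m)), ∑ B ∈ powersetCard b (univ \ A),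
    (∏ i ∈ A, x i) ^ 2 * ∏ i ∈ B, x i

theorem cast_choose_mul_msymm21 {m : ℕ} (x : Fin m → ℝ) (a b p : ℕ) :
    (b.choose p : ℝ) * msymm21 m a b x
      = ∑ A ∈ powersetCard a univ, ∑ B ∈ powersetCard b (univ \ A),
          ∑ _u ∈ powersetCard p B, (∏ l ∈ A, x l) ^ 2 * ∏ l ∈ B, x l := by
  simp only [msymm21, mul_sum, sum_const, card_powersetCard]
  refine sum_congr rfl fun A _ => sum_congr rfl fun B hB => ?_
  rw [(mem_powersetCard.1 hB).2, nsmul_eq_mul]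

theorem esymm_mul_esymm {m : ℕ} (x : Fin m → ℝ) {i j : ℕ} (hij : i ≤ j) :
    esymm m i x * esymm m j x
      = ∑ a ∈ range (i + 1),
          ((i + j - 2 * a).choose (i - a) : ℝ) * msymm21 m a (i + j - 2 * a) x := by
  simp only [esymm, sum_mul_sum, cast_choose_mul_msymm21, sum_sigma']
  refine sum_nbij' (fun p => ⟨#(p.1 ∩ p.2), p.1 ∩ p.2, (p.1 ∪ p.2) \ (p.1 ∩ p.2), p.1 \ p.2⟩)
    (fun q => ⟨q.2.1 ∪ q.2.2.2, q.2.1 ∪ (q.2.2.1 \ q.2.2.2)⟩) ?_ ?_ ?_ ?_ ?_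
  all_goals simp only [mem_sigma, mem_powersetCard, mem_range, subset_univ, true_and, subset_sdiff]
  · rintro ⟨S, T⟩ ⟨hS, hT⟩
    dsimp only at hS hT ⊢
    have := card_le_card (inter_subset_left (s₁ := S) (s₂ := T))
    have := card_union_add_card_inter S T
    have := card_sdiff_add_card_inter S T
    rw [card_sdiff_of_subset inter_subset_union]
    exact ⟨by omega, ⟨sdiff_disjoint, by omega⟩,
      ⟨sdiff_subset.trans subset_union_left, disjoint_sdiff_inter S T⟩, by omega⟩
  · rintro ⟨a, A, B, u⟩ ⟨ha, hA, ⟨hAB, hB⟩, hu, hu'⟩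
    rw [card_union_of_disjoint (hAB.symm.mono_right hu),
      card_union_of_disjoint (hAB.symm.mono_right sdiff_subset), card_sdiff_of_subset hu]
    omega
  · rintro ⟨S, T⟩ -
    have hS : S ∩ T ∪ S \ T = S := by grind
    have hT : S ∩ T ∪ ((S ∪ T) \ (S ∩ T)) \ (S \ T) = T := by grind
    simp only [hS, hT]
  · rintro ⟨a, A, B, u⟩ ⟨-, hA, ⟨hAB, -⟩, hu, -⟩
    rw [disjoint_left] at hAB
    have hi : (A ∪ u) ∩ (A ∪ B \ u) = A := by grind
    have hB : ((A ∪ u) ∪ (A ∪ B \ u)) \ A = B := by grind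
    have hu' : (A ∪ u) \ (A ∪ B \ u) = u := by grind
    simp only [hi, hB, hu', hA]
  · rintro ⟨S, T⟩ -
    exact prod_mul_prod_eq_sq_prod_inter_mul S T x

theorem sum_offDiag_sq_eq_sum_product {m : ℕ} (x : Fin m → ℝ) (a b : ℕ) :
    ∑ A ∈ powersetCard a (univ : Finset (Fin m)), ∑ B ∈ powersetCard (b + 2) (univ \ A),
      ∑ p ∈ B.offDiag, x p.1 ^ 2 * ((∏ i ∈ A, x i) ^ 2 * ∏ i ∈ (B.erase p.1).erase p.2, x i)
    = ∑ A ∈ powersetCard (a + 1) (univ : Finset (Fin m)), ∑ C ∈ powersetCard b (univ \ A),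
      ∑ _p ∈ A ×ˢ (univ \ (A ∪ C)), (∏ i ∈ A, x i) ^ 2 * ∏ i ∈ C, x i := by
  simp only [sum_sigma']
  refine sum_nbij' (fun q => ⟨insert q.2.2.1 q.1, (q.2.1.erase q.2.2.1).erase q.2.2.2, q.2.2⟩)
    (fun q => ⟨q.1.erase q.2.2.1, insert q.2.2.1 (insert q.2.2.2 q.2.1), q.2.2⟩) ?_ ?_ ?_ ?_ ?_
  all_goals simp only [mem_sigma, mem_powersetCard, mem_offDiag, mem_product, subset_univ, true_and,
    subset_sdiff, mem_sdiff, mem_univ, mem_union, not_or, disjoint_left]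
  · rintro ⟨A, B, l, k⟩ ⟨hA, ⟨hBA, hB⟩, hl, hk, hlk⟩
    have hlA : l ∉ A := hBA hl
    refine ⟨by rw [card_insert_of_notMem hlA, hA], ⟨by grind, ?_⟩, mem_insert_self _ _, by grind⟩
    rw [card_erase_of_mem (mem_erase.2 ⟨Ne.symm hlk, hk⟩), card_erase_of_mem hl, hB]; rfl
  · rintro ⟨A, C, l, k⟩ ⟨hA, ⟨hCA, hC⟩, hl, hkA, hkC⟩
    have hlkC : l ∉ insert k C := by grind
    refine ⟨by rw [card_erase_of_mem hl, hA]; rfl, ⟨by grind, ?_⟩, by grind⟩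
    rw [card_insert_of_notMem hlkC, card_insert_of_notMem hkC, hC]
  · rintro ⟨A, B, l, k⟩ ⟨hA, ⟨hBA, hB⟩, hl, hk, hlk⟩
    simp only [erase_insert (hBA hl), insert_erase (mem_erase.2 ⟨Ne.symm hlk, hk⟩), insert_erase hl]
  · rintro ⟨A, C, l, k⟩ ⟨hA, ⟨hCA, hC⟩, hl, hkA, hkC⟩
    have hlkC : l ∉ insert k C := by grind
    simp only [insert_erase hl, erase_insert hlkC, erase_insert hkC]
  · rintro ⟨A, B, l, k⟩ ⟨hA, ⟨hBA, hB⟩, hl, -⟩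
    rw [prod_insert (hBA hl)]
    ring

theorem sum_product_eq_msymm21 {m : ℕ} (x : Fin m → ℝ) (a b : ℕ) :
    ∑ A ∈ powersetCard (a + 1) (univ : Finset (Fin m)), ∑ C ∈ powersetCard b (univ \ A),
      ∑ _p ∈ A ×ˢ (univ \ (A ∪ C)), (∏ i ∈ A, x i) ^ 2 * ∏ i ∈ C, x i
    = (a + 1) * ((m : ℝ) - a - b - 1) * msymm21 m (a + 1) b x := by
  simp only [msymm21, mul_sum, sum_const, card_product]
  refine sum_congr rfl fun A hA => sum_congr rfl fun C hC => ?_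
  rw [mem_powersetCard] at hA hC
  rw [subset_sdiff] at hC
  have hAC : #(A ∪ C) = a + 1 + b := by rw [card_union_of_disjoint hC.1.2.symm, hA.2, hC.2]
  have hle : a + 1 + b ≤ m := hAC ▸ card_le_univ (A ∪ C) |>.trans_eq (Fintype.card_fin m)
  rw [card_univ_sdiff, hAC, hA.2, Fintype.card_fin, nsmul_eq_mul]
  push_cast [Nat.cast_sub hle]
  ring

theorem msymm21_step {m : ℕ} (x : Fin m → ℝ) (hx : ∀ i, 0 ≤ x i) (a b : ℕ) :
    ((b : ℝ) + 2) * (b + 1) * msymm21 m a (b + 2) x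
      ≤ (a + 1) * ((m : ℝ) - a - b - 1) * msymm21 m (a + 1) b x := by
  calc _ = ∑ A ∈ powersetCard a univ, ∑ B ∈ powersetCard (b + 2) (univ \ A), ∑ p ∈ B.offDiag,
          x p.1 * x p.2 * ((∏ i ∈ A, x i) ^ 2 * ∏ i ∈ (B.erase p.1).erase p.2, x i) := by
        simp only [msymm21, mul_sum]
        refine sum_congr rfl fun A _ => sum_congr rfl fun B hB => ?_
        rw [mul_left_comm, mul_prod_eq_sum_offDiag B (mem_powersetCard.1 hB).2, mul_sum]
        exact sum_congr rfl fun p _ => by ring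
    _ ≤ ∑ A ∈ powersetCard a univ, ∑ B ∈ powersetCard (b + 2) (univ \ A), ∑ p ∈ B.offDiag,
          x p.1 ^ 2 * ((∏ i ∈ A, x i) ^ 2 * ∏ i ∈ (B.erase p.1).erase p.2, x i) :=
        sum_le_sum fun A _ => sum_le_sum fun B _ => sum_offDiag_mul_le_sum_offDiag_sq B x
          (fun i j => (∏ l ∈ A, x l) ^ 2 * ∏ l ∈ (B.erase i).erase j, x l)
          (fun i j => by rw [erase_right_comm])
          (fun i j => mul_nonneg (sq_nonneg _) (prod_nonneg fun l _ => hx l))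
    _ = _ := by rw [sum_offDiag_sq_eq_sum_product, sum_product_eq_msymm21]

theorem esymm_mul_esymm_le {m : ℕ} (x : Fin m → ℝ) (hx : ∀ i, 0 ≤ x i) {i j : ℕ} (hij : i ≤ j)
    (hj : j ≤ 3) :
    ((m : ℝ) - i) * (j + 2) * (esymm m i x * esymm m (j + 2) x)
      ≤ (i + 1) * ((m : ℝ) - j - 1) * (esymm m (i + 1) x * esymm m (j + 1) x) := by
  rw [esymm_mul_esymm x (by omega : i ≤ j + 2), esymm_mul_esymm x (by omega : i + 1 ≤ j + 1)]
  -- each case is a nonnegative integer combination of the steps of degree `i + j + 2`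
  have s₀ := msymm21_step x hx 0 (i + j)
  have s₁ := msymm21_step x hx 1 (i + j - 2)
  have s₂ := msymm21_step x hx 2 (i + j - 4)
  have s₃ := msymm21_step x hx 3 (i + j - 6)
  interval_cases j <;> interval_cases i <;> norm_num [sum_range_succ, Nat.choose] at s₀ s₁ s₂ s₃ ⊢
    <;> linarith

noncomputable def esymmMean (m k : ℕ) (x : Fin m → ℝ) : ℝ := esymm m k x / m.choose k

theorem esymmMean_zero {m : ℕ} (x : Fin m → ℝ) : esymmMean m 0 x = 1 := by
  simp [esymmMean, esymm]

theorem esymm_eq_choose_mul_esymmMean {m : ℕ} (k : ℕ) (x : Fin m → ℝ) :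
    esymm m k x = m.choose k * esymmMean m k x := by
  rcases lt_or_ge m k with hmk | hkm
  · rw [esymm, powersetCard_eq_empty.2 (by simpa using hmk), sum_empty,
      Nat.choose_eq_zero_of_lt hmk, Nat.cast_zero, zero_mul]
  · rw [esymmMean, mul_div_cancel₀ _ (by exact_mod_cast (Nat.choose_pos hkm).ne')]

theorem esymmMean_pos {m k : ℕ} {x : Fin m → ℝ} (hx : ∀ i, 0 < x i) (hk : k ≤ m) :
    0 < esymmMean m k x := by
  refine div_pos (sum_pos (fun s _ => prod_pos fun i _ => hx i) ?_)
    (by exact_mod_cast Nat.choose_pos hk)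
  exact powersetCard_nonempty.2 (by simpa using hk)

theorem esymmMean_add_one {m k : ℕ} (x : Fin m → ℝ) (hk : k ≤ m) :
    esymmMean m k (x + 1) = ∑ i ∈ range (k + 1), (k.choose i : ℝ) * esymmMean m i x := by
  rw [esymmMean, esymm_add_one, sum_div]
  refine sum_congr rfl fun i hi => ?_
  have hik : i ≤ k := Nat.lt_succ_iff.1 (mem_range.1 hi)
  have hchoose : (m.choose k : ℝ) * k.choose i = m.choose i * (m - i).choose (k - i) := by
    exact_mod_cast Nat.choose_mul hik
  have hmk : (m.choose k : ℝ) ≠ 0 := by exact_mod_cast (Nat.choose_pos hk).ne'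
  have hmi : (m.choose i : ℝ) ≠ 0 := by exact_mod_cast (Nat.choose_pos (hik.trans hk)).ne'
  rw [esymmMean, mul_div_assoc', div_eq_div_iff hmk hmi]
  linear_combination -esymm m i x * hchoose

theorem cast_choose_succ_mul {m k : ℕ} (hk : k ≤ m) :
    (m.choose (k + 1) : ℝ) * (k + 1) = m.choose k * ((m : ℝ) - k) := by
  rw [← Nat.cast_sub hk]
  exact_mod_cast Nat.choose_succ_right_eq m k

theorem esymmMean_mul_le {m : ℕ} (x : Fin m → ℝ) (hx : ∀ i, 0 ≤ x i) {i j : ℕ} (hij : i ≤ j)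
    (hj : j ≤ 3) (hm : j + 2 ≤ m) :
    esymmMean m i x * esymmMean m (j + 2) x ≤ esymmMean m (i + 1) x * esymmMean m (j + 1) x := by
  have hci := cast_choose_succ_mul (m := m) (k := i) (by omega)
  have hcj := cast_choose_succ_mul (m := m) (k := j + 1) (by omega)
  push_cast at hcj
  have hpos : ∀ k ≤ m, (0 : ℝ) < m.choose k := fun k hk => by exact_mod_cast Nat.choose_pos hk
  have hfac : (0 : ℝ) < (i + 1) * ((m : ℝ) - j - 1) := by
    have : (j : ℝ) + 2 ≤ m := by exact_mod_cast hm
    nlinarith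
  simp only [esymmMean, div_mul_div_comm]
  rw [div_le_div_iff₀ (mul_pos (hpos i (by omega)) (hpos _ hm))
    (mul_pos (hpos _ (by omega)) (hpos _ (by omega)))]
  refine le_of_mul_le_mul_right ?_ hfac
  linear_combination ((m.choose i : ℝ) * m.choose (j + 2)) * esymm_mul_esymm_le x hx hij hj
    + esymm m i x * esymm m (j + 2) x * (m.choose (j + 1)) * ((m : ℝ) - j - 1) * hci
    - esymm m i x * esymm m (j + 2) x * (m.choose i) * ((m : ℝ) - i) * hcj

def refinedNewtonForm (E : ℕ → ℝ) : ℝ :=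
  (E 3 * E 5 - E 4 ^ 2) + 2 * (E 2 * E 4 - E 3 ^ 2) + (E 1 * E 3 - E 0 * E 4)

theorem refinedNewtonForm_nonpos {m : ℕ} (hm : 5 ≤ m) (κ : Fin m → ℝ) (hκ : ∀ i, 1 ≤ κ i) :
    refinedNewtonForm (fun k => esymmMean m k κ) ≤ 0 := by
  obtain ⟨x, hx, rfl⟩ : ∃ x : Fin m → ℝ, (∀ i, 0 ≤ x i) ∧ κ = x + 1 :=
    ⟨κ - 1, fun i => sub_nonneg.2 (hκ i), by simp⟩
  have h (i j : ℕ) (hij : i ≤ j := by norm_num) (hj : j ≤ 3 := by norm_num) :=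
    esymmMean_mul_le x hx hij hj (by omega)
  simp (disch := omega) only [refinedNewtonForm, esymmMean_add_one]
  norm_num [sum_range_succ, Nat.choose]
  -- grouped by degree in `x`, from 3 to 8
  linear_combination 4 * h 0 1 + (4 * h 0 2 + 12 * h 1 1) + (h 0 3 + 12 * h 1 2)
    + (3 * h 1 3 + 8 * h 2 2) + 3 * h 2 3 + h 3 3

theorem cast_choose_sub_one {n : ℕ} (hn : 1 ≤ n) :
    ((n - 1).choose 1 : ℝ) = n - 1 ∧
      ((n - 1).choose 2 : ℝ) = (n - 1) * (n - 2) / 2 ∧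
      ((n - 1).choose 3 : ℝ) = (n - 1) * (n - 2) * (n - 3) / 6 ∧
      ((n - 1).choose 4 : ℝ) = (n - 1) * (n - 2) * (n - 3) * (n - 4) / 24 ∧
      ((n - 1).choose 5 : ℝ) = (n - 1) * (n - 2) * (n - 3) * (n - 4) * (n - 5) / 120 := by
  simp only [Nat.cast_choose_eq_descPochhammer_div, descPochhammer_eval_eq_prod_range,
    prod_range_succ, prod_range_zero, Nat.factorial, Nat.cast_sub hn]
  push_cast
  refine ⟨?_, ?_, ?_, ?_, ?_⟩ <;> ring

theorem stmt11 (n : ℕ) (hn : 6 ≤ n) (κ : Fin (n - 1) → ℝ) (hκ : ∀ i, 1 ≤ κ i) :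
    (5 * esymm (n - 1) 5 κ * esymm (n - 1) 3 κ / esymm (n - 1) 4 κ
        - 4 * ((n : ℝ) - 5) / ((n : ℝ) - 4) * esymm (n - 1) 4 κ)
      + ((n : ℝ) - 4) * ((n : ℝ) - 5) / 6 *
        (4 * ((n : ℝ) - 3) / ((n : ℝ) - 4) * esymm (n - 1) 2 κ
          - 3 * (esymm (n - 1) 3 κ)^2 / esymm (n - 1) 4 κ)
      + ((n : ℝ) - 2) * ((n : ℝ) - 3) * ((n : ℝ) - 4) * ((n : ℝ) - 5) / 24 *
        (esymm (n - 1) 1 κ * esymm (n - 1) 3 κ / esymm (n - 1) 4 κ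
          - 4 * ((n : ℝ) - 1) / ((n : ℝ) - 4)) ≤ 0 := by
  have hF := refinedNewtonForm_nonpos (by omega : 5 ≤ n - 1) κ hκ
  have hE₄ : 0 < esymmMean (n - 1) 4 κ :=
    esymmMean_pos (fun i => one_pos.trans_le (hκ i)) (by omega)
  have hn' : (6 : ℝ) ≤ n := by exact_mod_cast hn
  obtain ⟨c₁, c₂, c₃, c₄, c₅⟩ := cast_choose_sub_one (by omega : 1 ≤ n)
  obtain ⟨h₁, h₂, h₃, h₄⟩ :
      (n : ℝ) - 1 ≠ 0 ∧ (n : ℝ) - 2 ≠ 0 ∧ (n : ℝ) - 3 ≠ 0 ∧ (n : ℝ) - 4 ≠ 0 := by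
    refine ⟨?_, ?_, ?_, ?_⟩ <;> linarith
  calc _ = ((n : ℝ) - 1) * (n - 2) * (n - 3) * (n - 5) / 6
        * refinedNewtonForm (fun k => esymmMean (n - 1) k κ) / esymmMean (n - 1) 4 κ := by
        simp only [esymm_eq_choose_mul_esymmMean _ κ, refinedNewtonForm, esymmMean_zero,
          c₁, c₂, c₃, c₄, c₅]
        field_simp [hE₄.ne']
        ring
    _ ≤ 0 := div_nonpos_of_nonpos_of_nonneg
        (mul_nonpos_of_nonneg_of_nonpos (by nlinarith) hF) hE₄.le
end

section
/- (Newton–MacLaurin inequality) Let Λ ∈ ℝ^{n−1} lie in the Garding cone Γ_k⁺, i.e., σⱼ(Λ) > 0 for all j ≤ k. Then σ_{k−1}(Λ)σ_{k+1}(Λ)/σ_k(Λ)² ≤ k(n−k−1)/((k+1)(n−k)), with equality if and only if Λ = c(1,…,1) for some c > 0. -/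
open Polynomial

theorem Nat.choose_pred_mul_choose_succ {m k : ℕ} (hk : 1 ≤ k) (hkm : k ≤ m) :
    (k + 1) * (m - k + 1) * (m.choose (k - 1) * m.choose (k + 1)) =
      k * (m - k) * m.choose k ^ 2 := by
  obtain ⟨k, rfl⟩ := Nat.exists_eq_add_of_le' hk
  have h₁ := Nat.choose_succ_right_eq m (k + 1)
  have h₂ := Nat.choose_succ_right_eq m k
  rw [show m - k = m - (k + 1) + 1 by omega] at h₂
  rw [Nat.add_sub_cancel]
  calc _ = m.choose (k + 1 + 1) * (k + 1 + 1) * (m.choose k * (m - (k + 1) + 1)) := by ring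
    _ = _ := by rw [h₁, ← h₂]; ring

namespace Multiset

section CommSemiring

variable {R : Type*} [CommSemiring R]

theorem esymm_zero (s : Multiset R) : s.esymm 0 = 1 := by
  simp [esymm, powersetCard_zero_left]

theorem esymm_one (s : Multiset R) : s.esymm 1 = s.sum := by
  simp [esymm, powersetCard_one, map_map]

theorem esymm_card (s : Multiset R) : s.esymm (card s) = s.prod := by
  simp [esymm, powersetCard_self]

theorem esymm_eq_zero_of_card_lt {s : Multiset R} {j : ℕ} (h : card s < j) : s.esymm j = 0 := by
  simp [esymm, powersetCard_eq_empty _ h]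

theorem esymm_cons_succ (a : R) (s : Multiset R) (j : ℕ) :
    (a ::ₘ s).esymm (j + 1) = s.esymm (j + 1) + a * s.esymm j := by
  simp only [esymm, powersetCard_cons, map_add, sum_add, map_map, Function.comp_def, prod_cons,
    sum_map_mul_left]

theorem esymm_replicate (m j : ℕ) (c : R) : (replicate m c).esymm j = m.choose j * c ^ j := by
  induction m generalizing j with
  | zero =>
    cases j with
    | zero => simp [esymm_zero]
    | succ j => simp [esymm_eq_zero_of_card_lt (show card (0 : Multiset R) < j + 1 by simp)]
  | succ m ih =>
    cases j with
    | zero => simp [esymm_zero]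
    | succ j =>
      rw [replicate_succ, esymm_cons_succ, ih, ih, Nat.choose_succ_succ', Nat.cast_add]
      ring

theorem sq_sum_eq_sum_map_sq_add_two_mul_esymm_two (s : Multiset R) :
    s.sum ^ 2 = (s.map (· ^ 2)).sum + 2 * s.esymm 2 := by
  induction s using Multiset.induction with
  | empty => simp [esymm_eq_zero_of_card_lt (show card (0 : Multiset R) < 2 by simp)]
  | cons a s ih =>
    rw [esymm_cons_succ, esymm_one, sum_cons, map_cons, sum_cons, add_sq, ih]
    ring

end CommSemiring

theorem esymm_eq_prod_mul_esymm_map_inv {K : Type*} [Field K] {s : Multiset K} (h0 : (0 : K) ∉ s)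
    {i j : ℕ} (hij : i + j = card s) : s.esymm i = s.prod * (s.map (·⁻¹)).esymm j := by
  induction s using Multiset.induction generalizing i j with
  | empty => simp_all [esymm_zero]
  | cons a s ih =>
    obtain ⟨ha, h0⟩ : a ≠ 0 ∧ (0 : K) ∉ s := by simpa [eq_comm] using h0
    rw [card_cons] at hij
    match i, j with
    | 0, j =>
      rw [esymm_zero, show j = card ((a ::ₘ s).map (·⁻¹)) by simp; omega, esymm_card,
        prod_map_inv', mul_inv_cancel₀ (prod_ne_zero (by simpa [eq_comm] using ⟨ha, h0⟩))]
    | i + 1, 0 =>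
      rw [esymm_zero, mul_one, show i + 1 = card (a ::ₘ s) by simp; omega, esymm_card]
    | i + 1, j + 1 =>
      rw [map_cons, esymm_cons_succ, esymm_cons_succ, ih h0 (i := i + 1) (j := j) (by omega),
        ih h0 (i := i) (j := j + 1) (by omega), prod_cons]
      field_simp
      ring

theorem sum_map_sub_sq {R : Type*} [CommRing R] (s : Multiset R) (r : R) :
    (s.map fun x => (x - r) ^ 2).sum = (s.map (· ^ 2)).sum - 2 * r * s.sum + card s * r ^ 2 := by
  induction s using Multiset.induction with
  | empty => simp
  | cons a s ih =>
    simp only [map_cons, sum_cons, card_cons, ih]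
    push_cast
    ring

section LinearOrderedRing

variable {K : Type*} [CommRing K] [LinearOrder K] [IsStrictOrderedRing K]

theorem forall_eq_of_sum_map_sub_sq_eq_zero {s : Multiset K} {r : K}
    (h : (s.map fun x => (x - r) ^ 2).sum = 0) : ∀ x ∈ s, x = r := by
  intro x hx
  have := all_zero_of_le_zero_le_of_sum_eq_zero (by simp [sq_nonneg]) h _ (mem_map_of_mem _ hx)
  simpa [sub_eq_zero] using this

end LinearOrderedRing

/-- Cleared of binomial coefficients, Newton's inequality `E_{k-1} E_{k+1} ≤ E_k ^ 2` for the
means `E_j = s.esymm j / (card s).choose j` reads `0 ≤ s.newtonGap k`. -/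
noncomputable def newtonGap (s : Multiset ℝ) (k : ℕ) : ℝ :=
  k * (card s - k) * s.esymm k ^ 2 -
    (k + 1) * (card s - k + 1) * (s.esymm (k - 1) * s.esymm (k + 1))

variable {s : Multiset ℝ} {k : ℕ}

theorem newtonGap_of_card_eq_succ_of_zero_mem (hs : card s = k + 1) (h0 : (0 : ℝ) ∈ s) :
    s.newtonGap k = k * s.esymm k ^ 2 := by
  rw [newtonGap, ← hs, esymm_card, prod_eq_zero h0, hs]
  push_cast
  ring

theorem newtonGap_of_card_eq_succ_of_zero_notMem (hk : 1 ≤ k) (hs : card s = k + 1)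
    (h0 : (0 : ℝ) ∉ s) :
    s.newtonGap k = (k + 1) * s.prod ^ 2 *
      ((s.map (·⁻¹)).map fun y => (y - (s.map (·⁻¹)).sum / (k + 1)) ^ 2).sum := by
  set t := s.map (·⁻¹)
  have ht : card t = k + 1 := by simp [t, hs]
  have hσ (i j : ℕ) (hij : i + j = k + 1) : s.esymm i = s.prod * t.esymm j :=
    esymm_eq_prod_mul_esymm_map_inv h0 (hij.trans hs.symm)
  have h2 := sq_sum_eq_sum_map_sq_add_two_mul_esymm_two t
  obtain ⟨k, rfl⟩ := Nat.exists_eq_add_of_le' hk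
  rw [newtonGap, sum_map_sub_sq, hs, ht, Nat.add_sub_cancel, hσ (k + 1) 1 (by ring),
    hσ k 2 (by ring), hσ (k + 1 + 1) 0 rfl, esymm_zero, esymm_one]
  field_simp
  push_cast
  linear_combination ((k + 2) ^ 2 * s.prod ^ 2) * h2

theorem newtonGap_nonneg_of_card_eq_succ (hk : 1 ≤ k) (hs : card s = k + 1) :
    0 ≤ s.newtonGap k := by
  by_cases h0 : (0 : ℝ) ∈ s
  · rw [newtonGap_of_card_eq_succ_of_zero_mem hs h0]
    positivity
  · rw [newtonGap_of_card_eq_succ_of_zero_notMem hk hs h0]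
    exact mul_nonneg (by positivity) (sum_nonneg (by simp [sq_nonneg]))

theorem exists_forall_eq_of_newtonGap_eq_zero_of_card_eq_succ (hk : 1 ≤ k)
    (hs : card s = k + 1) (h : s.newtonGap k = 0) (hσ : s.esymm k ≠ 0) : ∃ r, ∀ x ∈ s, x = r := by
  by_cases h0 : (0 : ℝ) ∈ s
  · rw [newtonGap_of_card_eq_succ_of_zero_mem hs h0] at h
    exact absurd h (mul_ne_zero (by positivity) (pow_ne_zero 2 hσ))
  · rw [newtonGap_of_card_eq_succ_of_zero_notMem hk hs h0] at h
    have hsum := (mul_eq_zero.mp h).resolve_left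
      (mul_ne_zero (by positivity) (pow_ne_zero 2 (prod_ne_zero h0)))
    refine ⟨((s.map (·⁻¹)).sum / (k + 1))⁻¹, fun x hx => ?_⟩
    rw [← forall_eq_of_sum_map_sub_sq_eq_zero hsum x⁻¹ (mem_map_of_mem _ hx), inv_inv]

end Multiset

namespace Polynomial

open Multiset

variable {p : ℝ[X]}

theorem card_roots_derivative (hp : card p.roots = p.natDegree) :
    card (derivative p).roots = (derivative p).natDegree := by
  have h₁ := card_roots_le_derivative p
  have h₂ := card_roots' (derivative p)
  rw [natDegree_derivative] at h₂ ⊢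
  omega

theorem esymm_roots_derivative {d j : ℕ} (hp : card p.roots = p.natDegree)
    (hd : p.natDegree = d + 1) (hj : j ≤ d) :
    (d + 1 : ℝ) * (derivative p).roots.esymm j = (d + 1 - j) * p.roots.esymm j := by
  have hp0 : p ≠ 0 := by rintro rfl; simp at hd
  have h' := coeff_eq_esymm_roots_of_card (card_roots_derivative hp) (k := d - j) (by simp [hd])
  have h := coeff_eq_esymm_roots_of_card hp (k := d - j + 1) (by omega)
  rw [coeff_derivative, h, leadingCoeff_derivative, natDegree_derivative, hd,
    show d + 1 - (d - j + 1) = j by omega, show d + 1 - 1 - (d - j) = j by omega] at h'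
  push_cast [Nat.cast_sub hj] at h'
  refine mul_left_cancel₀ (mul_ne_zero (leadingCoeff_ne_zero.mpr hp0)
    (pow_ne_zero j (by norm_num : (-1 : ℝ) ≠ 0))) ?_
  linear_combination -h'

theorem newtonGap_roots_derivative {k d : ℕ} (hk : 1 ≤ k) (hp : card p.roots = p.natDegree)
    (hd : p.natDegree = d + 1) (hkd : k + 1 ≤ d) :
    (d + 1 : ℝ) ^ 2 * (derivative p).roots.newtonGap k =
      (d + 1 - k) * (d - k) * p.roots.newtonGap k := by
  have hcard : card p.roots = d + 1 := hp.trans hd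
  have hcard' : card (derivative p).roots = d := by
    rw [card_roots_derivative hp, natDegree_derivative, hd, Nat.add_sub_cancel]
  have e₁ := esymm_roots_derivative hp hd (j := k - 1) (by omega)
  have e₂ := esymm_roots_derivative hp hd (j := k) (by omega)
  have e₃ := esymm_roots_derivative hp hd (j := k + 1) hkd
  rw [Nat.cast_sub hk] at e₁
  rw [newtonGap, newtonGap, hcard, hcard']
  set a' := (derivative p).roots.esymm (k - 1)
  set b' := (derivative p).roots.esymm k
  set c' := (derivative p).roots.esymm (k + 1)
  set a := p.roots.esymm (k - 1)
  set b := p.roots.esymm k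
  set c := p.roots.esymm (k + 1)
  push_cast at *
  linear_combination (k * (d - k) * ((d + 1) * b' + (d + 1 - k) * b)) * e₂ -
    ((k + 1) * (d - k + 1) * (d + 1) * c') * e₁ -
    ((k + 1) * (d - k + 1) * (d + 1 - (k - 1)) * a) * e₃

theorem forall_roots_eq_of_forall_roots_derivative_eq {d : ℕ} {r : ℝ}
    (hp : card p.roots = p.natDegree) (hd : p.natDegree = d + 1) (h2d : 2 ≤ d)
    (h : ∀ x ∈ (derivative p).roots, x = r) : ∀ x ∈ p.roots, x = r := by
  have hrep : (derivative p).roots = replicate d r := by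
    refine eq_replicate.mpr ⟨?_, h⟩
    rw [card_roots_derivative hp, natDegree_derivative, hd, Nat.add_sub_cancel]
  have e₁ := esymm_roots_derivative hp hd (j := 1) (by omega)
  have e₂ := esymm_roots_derivative hp hd (j := 2) h2d
  rw [hrep, esymm_replicate, esymm_one, Nat.choose_one_right] at e₁
  rw [hrep, esymm_replicate, Nat.cast_choose_two] at e₂
  have hd₀ : (d : ℝ) ≠ 0 := by positivity
  have hd₁ : (d : ℝ) - 1 ≠ 0 := by
    have : (2 : ℝ) ≤ d := by exact_mod_cast h2d
    linarith
  have hS : p.roots.sum = (d + 1) * r := by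
    refine mul_left_cancel₀ hd₀ ?_
    push_cast at e₁
    linear_combination -e₁
  have hσ₂ : 2 * p.roots.esymm 2 = (d + 1) * d * r ^ 2 := by
    refine mul_left_cancel₀ hd₁ ?_
    push_cast at e₂
    linear_combination -2 * e₂
  apply forall_eq_of_sum_map_sub_sq_eq_zero
  rw [sum_map_sub_sq, hp, hd]
  push_cast
  linear_combination -sq_sum_eq_sum_map_sq_add_two_mul_esymm_two p.roots +
    (p.roots.sum + (d - 1) * r) * hS - hσ₂

variable {k : ℕ}

theorem newtonGap_roots_nonneg (hk : 1 ≤ k) (hp : card p.roots = p.natDegree)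
    (hkp : k + 1 ≤ p.natDegree) : 0 ≤ p.roots.newtonGap k := by
  obtain ⟨d, hd⟩ : ∃ d, p.natDegree = d := ⟨_, rfl⟩
  rw [hd] at hkp
  induction d, hkp using Nat.le_induction generalizing p with
  | base => exact newtonGap_nonneg_of_card_eq_succ hk (hp.trans hd)
  | succ d hkd ih =>
    have hpos : (0 : ℝ) < (d + 1 - k) * (d - k) := by
      have : (k : ℝ) + 1 ≤ d := by exact_mod_cast hkd
      nlinarith
    refine (mul_nonneg_iff_of_pos_left hpos).mp ?_
    rw [← newtonGap_roots_derivative hk hp hd hkd]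
    exact mul_nonneg (sq_nonneg _)
      (ih (card_roots_derivative hp) (by rw [natDegree_derivative, hd, Nat.add_sub_cancel]))

theorem exists_forall_roots_eq_of_newtonGap_eq_zero (hk : 1 ≤ k)
    (hp : card p.roots = p.natDegree) (hkp : k + 1 ≤ p.natDegree)
    (h : p.roots.newtonGap k = 0) (hσ : p.roots.esymm k ≠ 0) : ∃ r, ∀ x ∈ p.roots, x = r := by
  obtain ⟨d, hd⟩ : ∃ d, p.natDegree = d := ⟨_, rfl⟩
  rw [hd] at hkp
  induction d, hkp using Nat.le_induction generalizing p with
  | base => exact exists_forall_eq_of_newtonGap_eq_zero_of_card_eq_succ hk (hp.trans hd) h hσ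
  | succ d hkd ih =>
    have hgap' : (derivative p).roots.newtonGap k = 0 := by
      have := newtonGap_roots_derivative hk hp hd hkd
      rw [h, mul_zero] at this
      exact (mul_eq_zero.mp this).resolve_left (by positivity)
    have hσ' : (derivative p).roots.esymm k ≠ 0 := by
      have hdk : (d : ℝ) + 1 - k ≠ 0 := by
        have : (k : ℝ) + 1 ≤ d := by exact_mod_cast hkd
        linarith
      intro h0
      have := esymm_roots_derivative hp hd (j := k) (by omega)
      rw [h0, mul_zero] at this
      exact hσ ((mul_eq_zero.mp this.symm).resolve_left hdk)
    obtain ⟨r, hr⟩ := ih (card_roots_derivative hp) hgap' hσ'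
      (by rw [natDegree_derivative, hd, Nat.add_sub_cancel])
    exact ⟨r, forall_roots_eq_of_forall_roots_derivative_eq hp hd (by omega) hr⟩

end Polynomial

namespace Multiset

variable {s : Multiset ℝ} {k : ℕ}

theorem newtonGap_nonneg (hk : 1 ≤ k) (hks : k + 1 ≤ card s) : 0 ≤ s.newtonGap k := by
  have hroots := roots_multiset_prod_X_sub_C s
  have hdeg := natDegree_multiset_prod_X_sub_C_eq_card s
  rw [← hroots]
  exact newtonGap_roots_nonneg hk (by rw [hroots, hdeg]) (by rwa [hdeg])

theorem exists_forall_eq_of_newtonGap_eq_zero (hk : 1 ≤ k) (hks : k + 1 ≤ card s)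
    (h : s.newtonGap k = 0) (hσ : s.esymm k ≠ 0) : ∃ r, ∀ x ∈ s, x = r := by
  have hroots := roots_multiset_prod_X_sub_C s
  have hdeg := natDegree_multiset_prod_X_sub_C_eq_card s
  rw [← hroots] at h hσ ⊢
  exact exists_forall_roots_eq_of_newtonGap_eq_zero hk (by rw [hroots, hdeg]) (by rwa [hdeg]) h hσ

theorem newtonGap_replicate {m : ℕ} (hk : 1 ≤ k) (hkm : k ≤ m) (c : ℝ) :
    (replicate m c).newtonGap k = 0 := by
  have h := congrArg (Nat.cast : ℕ → ℝ) (Nat.choose_pred_mul_choose_succ hk hkm)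
  push_cast [Nat.cast_sub hkm] at h
  obtain ⟨k, rfl⟩ := Nat.exists_eq_add_of_le' hk
  rw [newtonGap, card_replicate, esymm_replicate, esymm_replicate, esymm_replicate]
  simp only [Nat.add_sub_cancel] at h ⊢
  linear_combination (-c ^ (2 * k + 2)) * h

end Multiset

theorem stmt14 (n k : ℕ) (hk : 1 ≤ k) (hk' : k ≤ n - 2) (Λ : Fin (n - 1) → ℝ)
    (hΓ : ∀ j, 1 ≤ j → j ≤ k → 0 < esymm (n - 1) j Λ) :
    esymm (n - 1) (k - 1) Λ * esymm (n - 1) (k + 1) Λ / (esymm (n - 1) k Λ)^2 ≤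
      (k : ℝ) * ((n : ℝ) - (k : ℝ) - 1) / (((k : ℝ) + 1) * ((n : ℝ) - (k : ℝ))) ∧
    (esymm (n - 1) (k - 1) Λ * esymm (n - 1) (k + 1) Λ / (esymm (n - 1) k Λ)^2 =
        (k : ℝ) * ((n : ℝ) - (k : ℝ) - 1) / (((k : ℝ) + 1) * ((n : ℝ) - (k : ℝ))) ↔
      ∃ c : ℝ, 0 < c ∧ ∀ i, Λ i = c) := by
  set s : Multiset ℝ := Finset.univ.val.map Λ
  have hσ (j : ℕ) : esymm (n - 1) j Λ = s.esymm j := (Finset.esymm_map_val Λ _ j).symm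
  have hcard : Multiset.card s = n - 1 := by simp [s]
  simp only [hσ] at hΓ ⊢
  have hks : k + 1 ≤ Multiset.card s := by omega
  have hσk : 0 < s.esymm k := hΓ k hk le_rfl
  have hnk : (k : ℝ) + 2 ≤ n := by exact_mod_cast (by omega : k + 2 ≤ n)
  have hnk₀ : (0 : ℝ) < n - k := by linarith
  have hden : (0 : ℝ) < (k + 1) * (n - k) * s.esymm k ^ 2 := by positivity
  have hratio : s.esymm (k - 1) * s.esymm (k + 1) / s.esymm k ^ 2 =
      k * (n - k - 1) / ((k + 1) * (n - k)) -
        s.newtonGap k / ((k + 1) * (n - k) * s.esymm k ^ 2) := by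
    rw [Multiset.newtonGap, hcard, Nat.cast_sub (by omega : 1 ≤ n)]
    field_simp
    ring
  rw [hratio, sub_eq_self, div_eq_zero_iff, or_iff_left hden.ne']
  refine ⟨sub_le_self _ (div_nonneg (Multiset.newtonGap_nonneg hk hks) hden.le), fun h => ?_, ?_⟩
  · obtain ⟨r, hr⟩ := Multiset.exists_forall_eq_of_newtonGap_eq_zero hk hks h hσk.ne'
    have hσ₁ := hΓ 1 le_rfl hk
    rw [Multiset.eq_replicate.mpr ⟨hcard, hr⟩, Multiset.esymm_replicate, Nat.choose_one_right,
      pow_one] at hσ₁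
    exact ⟨r, pos_of_mul_pos_right hσ₁ (Nat.cast_nonneg _),
      fun i => hr _ (Multiset.mem_map_of_mem _ (Finset.mem_univ i))⟩
  · rintro ⟨c, -, hc⟩
    have hs : s = Multiset.replicate (n - 1) c :=
      Multiset.eq_replicate.mpr ⟨hcard, by simp [s, hc]⟩
    rw [hs]
    exact Multiset.newtonGap_replicate hk (by omega) c
end

section
/- For four real numbers κ₁,κ₂,κ₃,κ₄ satisfying κᵢκⱼ ≥ 1 for all i ≠ j, with p₁=σ₁/4, p₂=σ₂/6, p₃=σ₃/4, p₄=σ₄, one has 3(p₂p₄ − p₃²) + p₁p₃ − p₄ ≤ 0. -/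
/-!
Up to the factor `-1/16`, the left-hand side is the sum, over the six pairs `{i, j}` with
complement `{k, l}`, of `κᵢκⱼ (κᵢκⱼ - 1) (κₖ - κₗ)²`; each summand is nonnegative when `κᵢκⱼ ≥ 1`.
-/

lemma mul_sub_one_mul_sq_nonneg {R : Type*} [CommRing R] [LinearOrder R] [IsStrictOrderedRing R]
    {p : R} (hp : 1 ≤ p) (t : R) : 0 ≤ p * (p - 1) * t ^ 2 :=
  mul_nonneg (mul_nonneg (zero_le_one.trans hp) (sub_nonneg.mpr hp)) (sq_nonneg t)

theorem stmt18 (a b c d : ℝ)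
    (hab : 1 ≤ a * b) (hac : 1 ≤ a * c) (had : 1 ≤ a * d)
    (hbc : 1 ≤ b * c) (hbd : 1 ≤ b * d) (hcd : 1 ≤ c * d) :
    3 * (((a*b + a*c + a*d + b*c + b*d + c*d) / 6) * (a*b*c*d) - ((a*b*c + a*b*d + a*c*d + b*c*d) / 4)^2)
      + ((a + b + c + d) / 4) * ((a*b*c + a*b*d + a*c*d + b*c*d) / 4) - (a*b*c*d) ≤ 0 := by
  have sum_of_squares :
      3 * (((a*b + a*c + a*d + b*c + b*d + c*d) / 6) * (a*b*c*d)
          - ((a*b*c + a*b*d + a*c*d + b*c*d) / 4)^2)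
        + ((a + b + c + d) / 4) * ((a*b*c + a*b*d + a*c*d + b*c*d) / 4) - (a*b*c*d)
      = -((a*b) * (a*b - 1) * (c - d)^2 + (a*c) * (a*c - 1) * (b - d)^2
          + (a*d) * (a*d - 1) * (b - c)^2 + (b*c) * (b*c - 1) * (a - d)^2
          + (b*d) * (b*d - 1) * (a - c)^2 + (c*d) * (c*d - 1) * (a - b)^2) / 16 := by
    ring
  rw [sum_of_squares]
  linarith [mul_sub_one_mul_sq_nonneg hab (c - d), mul_sub_one_mul_sq_nonneg hac (b - d),
    mul_sub_one_mul_sq_nonneg had (b - c), mul_sub_one_mul_sq_nonneg hbc (a - d),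
    mul_sub_one_mul_sq_nonneg hbd (a - c), mul_sub_one_mul_sq_nonneg hcd (a - b)]
end
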